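/- For all vectors u, v in ℝ², one has (1/4)·‖u − v‖⁴ ≤ (‖u‖²·u − ‖v‖²·v) · (u − v), where · denotes the Euclidean inner product. -/
import Mathlib

open RealInnerProductSpace

theorem stmt_0 (u v : EuclideanSpace ℝ (Fin 2)) :
    (1 / 4) * ‖u - v‖ ^ 4 ≤ ⟪‖u‖ ^ 2 • u - ‖v‖ ^ 2 • v, u - v⟫ := by
  have key : ⟪‖u‖ ^ 2 • u - ‖v‖ ^ 2 • v, u - v⟫ =
      ‖u‖ ^ 4 + ‖v‖ ^ 4 - (‖u‖ ^ 2 + ‖v‖ ^ 2) * ⟪u, v⟫ := by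
    rw [inner_sub_left, inner_sub_right, inner_sub_right, real_inner_smul_left,
      real_inner_smul_left, real_inner_smul_left, real_inner_smul_left,
      real_inner_self_eq_norm_sq, real_inner_self_eq_norm_sq, real_inner_comm v u]
    ring
  have hn : ‖u - v‖ ^ 2 = ‖u‖ ^ 2 - 2 * ⟪u, v⟫ + ‖v‖ ^ 2 := norm_sub_sq_real u v
  have habs := abs_real_inner_le_norm u v
  have hcs : ⟪u, v⟫ ^ 2 ≤ (‖u‖ * ‖v‖) ^ 2 := by
    rw [← sq_abs]
    exact pow_le_pow_left₀ (abs_nonneg _) habs 2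
  have h4 : ‖u - v‖ ^ 4 = (‖u - v‖ ^ 2) ^ 2 := by ring
  rw [key, h4, hn]
  nlinarith [sq_nonneg (‖u‖ - ‖v‖), sq_nonneg (‖u‖ + ‖v‖), norm_nonneg u, norm_nonneg v,
    sq_nonneg (‖u‖ ^ 2 - ‖v‖ ^ 2)]
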